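/- arXiv:2302.08816 — 2 statements merged into one kernel-verified Lean document; each statement's English description precedes it below -/
import Mathlib

section
/- Let E be a complex Hilbert space, F = E' its topological dual, and J : E → F a bounded linear operator satisfying ⟨J e¹, e²⟩_{F,E} = -conj(⟨J e², e¹⟩_{F,E}) for all e¹, e² ∈ E. Then the graph D = {(J e, e) : e ∈ E} ⊆ F × E equals its orthogonal companion with respect to the bond pairing ⟪(f¹,e¹),(f²,e²)⟫ := conj(⟨f¹,e²⟩) + ⟨f²,e¹⟩; that is, D is a Stokes-Dirac structure. -/
open scoped ComplexConjugate InnerProductSpace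

section BondPairing

variable (𝕜 : Type*) {E : Type*} [RCLike 𝕜] [NormedAddCommGroup E] [InnerProductSpace 𝕜 E]

/-- The orthogonal companion `D^[⊥]` for the bond pairing on `F × E`, with `F = E'`
identified with `E` through the Riesz isomorphism. -/
def bondCompanion (D : Set (E × E)) : Set (E × E) :=
  {b | ∀ d ∈ D, conj ⟪b.1, d.2⟫_𝕜 + ⟪d.1, b.2⟫_𝕜 = 0}

variable {𝕜}

theorem mem_bondCompanion_graph_iff {J : E → E} {b : E × E} :
    b ∈ bondCompanion 𝕜 {p | p.1 = J p.2} ↔ ∀ e, conj ⟪b.1, e⟫_𝕜 + ⟪J e, b.2⟫_𝕜 = 0 :=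
  ⟨fun h e => h (J e, e) rfl, fun h d (hd : d.1 = J d.2) => hd ▸ h d.2⟩

theorem mem_bondCompanion_graph_iff_of_skew {J : E → E}
    (hJ : ∀ e₁ e₂, ⟪J e₁, e₂⟫_𝕜 = -conj ⟪J e₂, e₁⟫_𝕜) {b : E × E} :
    b ∈ bondCompanion 𝕜 {p | p.1 = J p.2} ↔ ∀ e, ⟪b.1, e⟫_𝕜 = ⟪J b.2, e⟫_𝕜 := by
  simp only [mem_bondCompanion_graph_iff, hJ _ b.2, ← sub_eq_add_neg, sub_eq_zero,
    (starRingEnd 𝕜).injective.eq_iff]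

theorem bondCompanion_graph_of_skew {J : E → E}
    (hJ : ∀ e₁ e₂, ⟪J e₁, e₂⟫_𝕜 = -conj ⟪J e₂, e₁⟫_𝕜) :
    bondCompanion 𝕜 {p | p.1 = J p.2} = {p | p.1 = J p.2} := by
  ext b
  rw [mem_bondCompanion_graph_iff_of_skew hJ]
  exact ⟨ext_inner_right 𝕜, fun h e => h ▸ rfl⟩

end BondPairing

theorem stmt_0_general {E : Type*} [NormedAddCommGroup E] [InnerProductSpace ℂ E]
    (J : E →L[ℂ] E)
    (hJ : ∀ e₁ e₂ : E, (inner ℂ (J e₁) e₂ : ℂ) = -conj (inner ℂ (J e₂) e₁ : ℂ)) :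
    {b : E × E | ∀ d ∈ {p : E × E | p.1 = J p.2},
        conj (inner ℂ b.1 d.2 : ℂ) + (inner ℂ d.1 b.2 : ℂ) = 0}
      = {p : E × E | p.1 = J p.2} :=
  bondCompanion_graph_of_skew hJ

/-- The graph of a bounded operator `J : E → F ≅ E` (dual identified with `E` via Riesz,
so the duality pairing `⟨f, e⟩_{F,E}`, antilinear in `f` and linear in `e`, is the inner
product) satisfying the skew-symmetry-like identity is a Stokes-Dirac structure:
it equals its orthogonal companion w.r.t. the bond pairing
`⟪(f¹,e¹),(f²,e²)⟫ = conj ⟨f¹,e²⟩ + ⟨f²,e¹⟩`. -/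
theorem stmt_0 {E : Type*} [NormedAddCommGroup E] [InnerProductSpace ℂ E] [CompleteSpace E]
    (J : E →L[ℂ] E)
    (hJ : ∀ e₁ e₂ : E, (inner ℂ (J e₁) e₂ : ℂ) = -conj (inner ℂ (J e₂) e₁ : ℂ)) :
    {b : E × E | ∀ d ∈ {p : E × E | p.1 = J p.2},
        conj (inner ℂ b.1 d.2 : ℂ) + (inner ℂ d.1 b.2 : ℂ) = 0}
      = {p : E × E | p.1 = J p.2} :=
  stmt_0_general J hJ
end

section
/- Let E be a complex Hilbert space, F = E', and J : E → F bounded with graph D = {(Je, e) : e ∈ E}. If (f, e) ∈ D^[⊥] (the orthogonal companion of D in the bond space), then f = J e. In particular D^[⊥] ⊆ D. -/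
open scoped ComplexConjugate

/- Pairing `(f, e)` with the graph point `(J v, v)` gives `conj ⟪f, v⟫ + ⟪J v, e⟫ = 0`, and
skew-symmetry turns `⟪J v, e⟫` into `-conj ⟪J e, v⟫`; hence `⟪f, v⟫ = ⟪J e, v⟫` for every `v`. -/

theorem eq_apply_of_forall_conj_inner_add_inner_apply_eq_zero {𝕜 E : Type*} [RCLike 𝕜]
    [NormedAddCommGroup E] [InnerProductSpace 𝕜 E] (J : E → E)
    (hJ : ∀ e₁ e₂ : E, (inner 𝕜 (J e₁) e₂ : 𝕜) = -conj (inner 𝕜 (J e₂) e₁ : 𝕜))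
    {f e : E} (hmem : ∀ e₂ : E, conj (inner 𝕜 f e₂ : 𝕜) + (inner 𝕜 (J e₂) e : 𝕜) = 0) :
    f = J e :=
  ext_inner_right 𝕜 fun v => (starRingEnd 𝕜).injective <| by linear_combination hmem v - hJ v e

theorem stmt_3_general {E : Type*} [NormedAddCommGroup E] [InnerProductSpace ℂ E]
    (J : E →L[ℂ] E)
    (hJ : ∀ e₁ e₂ : E, (inner ℂ (J e₁) e₂ : ℂ) = -conj (inner ℂ (J e₂) e₁ : ℂ))
    (f e : E)
    (hmem : ∀ e₂ : E, conj (inner ℂ f e₂ : ℂ) + (inner ℂ (J e₂) e : ℂ) = 0) :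
    f = J e ∧
      {b : E × E | ∀ d ∈ {p : E × E | p.1 = J p.2},
          conj (inner ℂ b.1 d.2 : ℂ) + (inner ℂ d.1 b.2 : ℂ) = 0}
        ⊆ {p : E × E | p.1 = J p.2} := by
  refine ⟨eq_apply_of_forall_conj_inner_add_inner_apply_eq_zero J hJ hmem, ?_⟩
  rintro ⟨f', e'⟩ hb
  exact eq_apply_of_forall_conj_inner_add_inner_apply_eq_zero J hJ fun v => hb (J v, v) rfl

/-- If `(f,e)` lies in the orthogonal companion of the graph `D = {(Je, e)}` of a bounded
operator `J` satisfying the skew-symmetry-like identity (dual identified with `E` via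
Riesz, pairing = inner product), then `f = J e`; in particular `D^[⊥] ⊆ D`. -/
theorem stmt_3 {E : Type*} [NormedAddCommGroup E] [InnerProductSpace ℂ E] [CompleteSpace E]
    (J : E →L[ℂ] E)
    (hJ : ∀ e₁ e₂ : E, (inner ℂ (J e₁) e₂ : ℂ) = -conj (inner ℂ (J e₂) e₁ : ℂ))
    (f e : E)
    (hmem : ∀ e₂ : E, conj (inner ℂ f e₂ : ℂ) + (inner ℂ (J e₂) e : ℂ) = 0) :
    f = J e ∧
      {b : E × E | ∀ d ∈ {p : E × E | p.1 = J p.2},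
          conj (inner ℂ b.1 d.2 : ℂ) + (inner ℂ d.1 b.2 : ℂ) = 0}
        ⊆ {p : E × E | p.1 = J p.2} :=
  stmt_3_general J hJ f e hmem
end
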